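/- Let V be a finite-dimensional complex vector space of dimension v, E ⊆ V a subspace of dimension e, and N₀ ≤ N₁ two norms on V with N₁ ≤ e^C·N₀ for some C ≥ 0. Then for every p ∈ [1,∞), |v·d_p(N₀,N₁)^p − e·d_p(N₀|_E, N₁|_E)^p| ≤ (v − e)·C^p, where N|_E denotes the restriction of the norm N to E. -/

import Mathlib

open scoped BigOperators

/-- A (complex, Hermitian-homogeneous) norm on a complex vector space, given as a function. -/
structure IsCNorm {V : Type*} [AddCommGroup V] [Module ℂ V] (N : V → ℝ) : Prop where
  nonneg : ∀ w, 0 ≤ N w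
  eq_zero : ∀ w, N w = 0 → w = 0
  smul : ∀ (c : ℂ) (w : V), N (c • w) = ‖c‖ * N w
  triangle : ∀ w w', N (w + w') ≤ N w + N w'

/-- The `j`-th logarithmic relative spectrum of the norm `N` with respect to `N'`:
`λ_j(N,N') = sup_{W ⊆ V, dim W = j} inf_{w ∈ W \ {0}} log (N' w / N w)`. -/
noncomputable def logSpec {V : Type*} [AddCommGroup V] [Module ℂ V]
    (N N' : V → ℝ) (j : ℕ) : ℝ :=
  sSup {r : ℝ | ∃ W : Submodule ℂ V, Module.finrank ℂ ↥W = j ∧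
    r = sInf {s : ℝ | ∃ w : V, w ∈ W ∧ w ≠ 0 ∧ s = Real.log (N' w / N w)}}

/-- The quasi-distance `d_p(N,N') = ((1/v) ∑_{j=1}^v |λ_j(N,N')|^p)^(1/p)`. -/
noncomputable def dp {V : Type*} [AddCommGroup V] [Module ℂ V]
    (p : ℝ) (v : ℕ) (N N' : V → ℝ) : ℝ :=
  ((∑ j ∈ Finset.Icc 1 v, |logSpec N N' j| ^ p) / (v : ℝ)) ^ (1 / p)


open Finset Module

theorem sum_Icc_one_add {M : Type*} [AddCommMonoid M] (f : ℕ → M) (k e : ℕ) :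
    ∑ j ∈ Icc 1 (k + e), f j = ∑ j ∈ Icc 1 k, f j + ∑ j ∈ Icc 1 e, f (j + k) := by
  induction e with
  | zero => simp
  | succ e ih =>
    rw [← add_assoc, sum_Icc_succ_top (by omega), ih, sum_Icc_succ_top (by omega), add_assoc,
      Nat.add_right_comm e 1 k, add_comm k e]

theorem abs_sum_sub_sum_le_of_interlace {a b : ℕ → ℝ} {k e : ℕ} {M : ℝ}
    (ha₀ : ∀ j ∈ Icc 1 (k + e), 0 ≤ a j) (haM : ∀ j ∈ Icc 1 (k + e), a j ≤ M)
    (hba : ∀ j ∈ Icc 1 e, b j ≤ a j) (hab : ∀ j ∈ Icc 1 e, a (j + k) ≤ b j) :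
    |∑ j ∈ Icc 1 (k + e), a j - ∑ j ∈ Icc 1 e, b j| ≤ k * M := by
  have hhead : ∑ j ∈ Icc 1 k, a j ≤ k * M := by
    simpa using sum_le_sum fun j hj => haM j (Icc_subset_Icc_right (by omega) hj)
  have htail : 0 ≤ ∑ j ∈ Icc 1 k, a (j + e) :=
    sum_nonneg fun j hj => ha₀ _ (by simp only [mem_Icc] at hj ⊢; omega)
  have hshift : ∑ j ∈ Icc 1 e, a (j + k) ≤ ∑ j ∈ Icc 1 e, b j := sum_le_sum hab
  have hle : ∑ j ∈ Icc 1 e, b j ≤ ∑ j ∈ Icc 1 e, a j := sum_le_sum hba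
  have hsplit := sum_Icc_one_add a e k
  rw [add_comm e k] at hsplit
  rw [abs_of_nonneg (by linarith), sum_Icc_one_add]
  linarith

theorem Submodule.exists_le_finrank_eq {K V : Type*} [DivisionRing K] [AddCommGroup V]
    [Module K V] (W : Submodule K V) {j : ℕ} (hj : j ≤ finrank K W) :
    ∃ U ≤ W, finrank K U = j := by
  obtain ⟨b, hb⟩ := exists_linearIndependent_of_le_finrank hj
  refine ⟨(Submodule.span K (Set.range b)).map W.subtype, Submodule.map_subtype_le _ _, ?_⟩
  rw [Submodule.finrank_map_subtype_eq, finrank_span_eq_card hb, Fintype.card_fin]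

theorem Submodule.ne_bot_of_one_le_finrank {R V : Type*} [Ring R] [Nontrivial R] [AddCommGroup V]
    [Module R V] {W : Submodule R V} (h : 1 ≤ finrank R W) : W ≠ ⊥ := by
  rintro rfl
  simp at h

theorem Submodule.finrank_add_finrank_le_finrank_comap_subtype_add {K V : Type*} [DivisionRing K]
    [AddCommGroup V] [Module K V] [FiniteDimensional K V] (W E : Submodule K V) :
    finrank K W + finrank K E ≤ finrank K (W.comap E.subtype) + finrank K V := by
  rw [← Submodule.finrank_map_subtype_eq, Submodule.map_comap_subtype, add_comm (finrank K W),
    ← Submodule.finrank_sup_add_finrank_inf_eq E W, add_comm]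
  exact Nat.add_le_add_left (Submodule.finrank_le _) _

theorem IsCNorm.pos {V : Type*} [AddCommGroup V] [Module ℂ V] {N : V → ℝ} (h : IsCNorm N)
    {w : V} (hw : w ≠ 0) : 0 < N w :=
  (h.nonneg w).lt_of_ne fun h0 => hw (h.eq_zero w h0.symm)

theorem Real.log_div_mem_Icc_of_le_of_le_exp_mul {x y C : ℝ} (hx : 0 < x) (hxy : x ≤ y)
    (hyx : y ≤ Real.exp C * x) : Real.log (y / x) ∈ Set.Icc 0 C := by
  refine ⟨Real.log_nonneg ((one_le_div hx).mpr hxy), ?_⟩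
  rw [Real.log_le_iff_le_exp (div_pos (hx.trans_le hxy) hx)]
  exact (div_le_iff₀ hx).mpr hyx

section LogSpec

variable {V : Type*} [AddCommGroup V] [Module ℂ V] {N N' : V → ℝ} {a b : ℝ}

noncomputable def minLogRatio (N N' : V → ℝ) (W : Submodule ℂ V) : ℝ :=
  sInf {s : ℝ | ∃ w : V, w ∈ W ∧ w ≠ 0 ∧ s = Real.log (N' w / N w)}

theorem logSpec_eq_sSup_minLogRatio (N N' : V → ℝ) (j : ℕ) :
    logSpec N N' j =
      sSup {r : ℝ | ∃ W : Submodule ℂ V, finrank ℂ W = j ∧ r = minLogRatio N N' W} :=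
  rfl

theorem minLogRatio_le (ha : ∀ w : V, w ≠ 0 → a ≤ Real.log (N' w / N w))
    {W : Submodule ℂ V} {w : V} (hw : w ∈ W) (hw₀ : w ≠ 0) :
    minLogRatio N N' W ≤ Real.log (N' w / N w) :=
  csInf_le ⟨a, by rintro s ⟨u, -, hu₀, rfl⟩; exact ha u hu₀⟩ ⟨w, hw, hw₀, rfl⟩

theorem le_minLogRatio {W : Submodule ℂ V} (hW : W ≠ ⊥) {r : ℝ}
    (h : ∀ w ∈ W, w ≠ 0 → r ≤ Real.log (N' w / N w)) : r ≤ minLogRatio N N' W := by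
  obtain ⟨w, hw, hw₀⟩ := Submodule.exists_mem_ne_zero_of_ne_bot hW
  exact le_csInf ⟨_, w, hw, hw₀, rfl⟩ (by rintro s ⟨u, hu, hu₀, rfl⟩; exact h u hu hu₀)

theorem minLogRatio_mem_Icc (hf : ∀ w : V, w ≠ 0 → Real.log (N' w / N w) ∈ Set.Icc a b)
    {W : Submodule ℂ V} (hW : W ≠ ⊥) : minLogRatio N N' W ∈ Set.Icc a b := by
  obtain ⟨w, hw, hw₀⟩ := Submodule.exists_mem_ne_zero_of_ne_bot hW
  exact ⟨le_minLogRatio hW fun u _ hu₀ => (hf u hu₀).1,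
    (minLogRatio_le (fun u hu₀ => (hf u hu₀).1) hw hw₀).trans (hf w hw₀).2⟩

theorem minLogRatio_anti (ha : ∀ w : V, w ≠ 0 → a ≤ Real.log (N' w / N w))
    {U W : Submodule ℂ V} (hU : U ≠ ⊥) (hUW : U ≤ W) :
    minLogRatio N N' W ≤ minLogRatio N N' U :=
  le_minLogRatio hU fun _ hw hw₀ => minLogRatio_le ha (hUW hw) hw₀

theorem minLogRatio_restrict (E : Submodule ℂ V) (W : Submodule ℂ E) :
    minLogRatio (fun w : E => N w) (fun w : E => N' w) W = minLogRatio N N' (W.map E.subtype) := by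
  unfold minLogRatio
  congr 1
  ext s
  constructor
  · rintro ⟨w, hw, hw₀, rfl⟩
    exact ⟨w, Submodule.mem_map_of_mem hw, by simpa using hw₀, rfl⟩
  · rintro ⟨_, ⟨w, hw, rfl⟩, hw₀, rfl⟩
    exact ⟨w, hw, by simpa using hw₀, rfl⟩

theorem minLogRatio_le_logSpec (hf : ∀ w : V, w ≠ 0 → Real.log (N' w / N w) ∈ Set.Icc a b)
    {j : ℕ} (hj₁ : 1 ≤ j) {W : Submodule ℂ V} (hW : finrank ℂ W = j) :
    minLogRatio N N' W ≤ logSpec N N' j := by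
  rw [logSpec_eq_sSup_minLogRatio]
  refine le_csSup ⟨b, ?_⟩ ⟨W, hW, rfl⟩
  rintro r ⟨U, hU, rfl⟩
  exact (minLogRatio_mem_Icc hf (Submodule.ne_bot_of_one_le_finrank (hU ▸ hj₁))).2

theorem logSpec_le {j : ℕ} (hj : j ≤ finrank ℂ V) {r : ℝ}
    (h : ∀ W : Submodule ℂ V, finrank ℂ W = j → minLogRatio N N' W ≤ r) :
    logSpec N N' j ≤ r := by
  obtain ⟨W, -, hW⟩ := (⊤ : Submodule ℂ V).exists_le_finrank_eq (j := j) (by rwa [finrank_top])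
  rw [logSpec_eq_sSup_minLogRatio]
  refine csSup_le ⟨_, W, hW, rfl⟩ ?_
  rintro _ ⟨U, hU, rfl⟩
  exact h U hU

theorem logSpec_mem_Icc (hf : ∀ w : V, w ≠ 0 → Real.log (N' w / N w) ∈ Set.Icc a b)
    {j : ℕ} (hj₁ : 1 ≤ j) (hj : j ≤ finrank ℂ V) : logSpec N N' j ∈ Set.Icc a b := by
  have hbot : ∀ W : Submodule ℂ V, finrank ℂ W = j → W ≠ ⊥ := fun W hW =>
    Submodule.ne_bot_of_one_le_finrank (hW ▸ hj₁)
  obtain ⟨W, -, hW⟩ := (⊤ : Submodule ℂ V).exists_le_finrank_eq (j := j) (by rwa [finrank_top])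
  exact ⟨(minLogRatio_mem_Icc hf (hbot W hW)).1.trans (minLogRatio_le_logSpec hf hj₁ hW),
    logSpec_le hj fun U hU => (minLogRatio_mem_Icc hf (hbot U hU)).2⟩

theorem logSpec_restrict_le (E : Submodule ℂ V)
    (hf : ∀ w : V, w ≠ 0 → Real.log (N' w / N w) ∈ Set.Icc a b)
    {j : ℕ} (hj₁ : 1 ≤ j) (hj : j ≤ finrank ℂ E) :
    logSpec (fun w : E => N w) (fun w : E => N' w) j ≤ logSpec N N' j :=
  logSpec_le hj fun U hU => by
    rw [minLogRatio_restrict]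
    exact minLogRatio_le_logSpec hf hj₁ (by rw [Submodule.finrank_map_subtype_eq, hU])

/-- A `(j + k)`-dimensional subspace of `V` meets `E` in dimension at least `j`. -/
theorem logSpec_add_le_logSpec_restrict [FiniteDimensional ℂ V] (E : Submodule ℂ V)
    (hf : ∀ w : V, w ≠ 0 → Real.log (N' w / N w) ∈ Set.Icc a b)
    {j k : ℕ} (hj₁ : 1 ≤ j) (hjk : j + k ≤ finrank ℂ V) (hk : finrank ℂ V ≤ finrank ℂ E + k) :
    logSpec N N' (j + k) ≤ logSpec (fun w : E => N w) (fun w : E => N' w) j := by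
  have hfE : ∀ w : E, w ≠ 0 → Real.log (N' w / N w) ∈ Set.Icc a b := fun w hw =>
    hf w (by simpa using hw)
  refine logSpec_le hjk fun W hW => ?_
  have hdim := W.finrank_add_finrank_le_finrank_comap_subtype_add E
  obtain ⟨U, hUW, hU⟩ := (W.comap E.subtype).exists_le_finrank_eq (j := j) (by omega)
  have hUbot : U.map E.subtype ≠ ⊥ := Submodule.ne_bot_of_one_le_finrank <| by
    rwa [Submodule.finrank_map_subtype_eq, hU]
  calc minLogRatio N N' W
      ≤ minLogRatio N N' (U.map E.subtype) :=
        minLogRatio_anti (fun w hw => (hf w hw).1) hUbot (Submodule.map_le_iff_le_comap.2 hUW)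
    _ = minLogRatio (fun w : E => N w) (fun w : E => N' w) U := (minLogRatio_restrict E U).symm
    _ ≤ logSpec (fun w : E => N w) (fun w : E => N' w) j :=
        minLogRatio_le_logSpec hfE hj₁ hU

end LogSpec

theorem natCast_mul_dp_rpow {W : Type*} [AddCommGroup W] [Module ℂ W] {p : ℝ} (hp : p ≠ 0)
    (n : ℕ) (N N' : W → ℝ) :
    (n : ℝ) * dp p n N N' ^ p = ∑ j ∈ Icc 1 n, |logSpec N N' j| ^ p := by
  rcases Nat.eq_zero_or_pos n with rfl | hn
  · simp
  have hS : 0 ≤ ∑ j ∈ Icc 1 n, |logSpec N N' j| ^ p :=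
    sum_nonneg fun j _ => Real.rpow_nonneg (abs_nonneg _) p
  have hn' : (0 : ℝ) < n := by exact_mod_cast hn
  rw [dp, ← Real.rpow_mul (div_nonneg hS hn'.le), one_div_mul_cancel hp, Real.rpow_one,
    mul_div_cancel₀ _ hn'.ne']

theorem dp_restrict_compare_general {V : Type*} [AddCommGroup V] [Module ℂ V]
    [FiniteDimensional ℂ V] (v e : ℕ) (hdim : Module.finrank ℂ V = v)
    (E : Submodule ℂ V) (hdimE : Module.finrank ℂ ↥E = e)
    (N₀ N₁ : V → ℝ) (h₀ : IsCNorm N₀)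
    (C : ℝ)
    (hle : ∀ w, N₀ w ≤ N₁ w) (hup : ∀ w, N₁ w ≤ Real.exp C * N₀ w)
    (p : ℝ) (hp : 1 ≤ p) :
    |(v : ℝ) * dp p v N₀ N₁ ^ p -
        (e : ℝ) * dp p e (fun w : ↥E => N₀ ↑w) (fun w : ↥E => N₁ ↑w) ^ p| ≤
      ((v : ℝ) - (e : ℝ)) * C ^ p := by
  have hf : ∀ w : V, w ≠ 0 → Real.log (N₁ w / N₀ w) ∈ Set.Icc 0 C := fun w hw =>
    Real.log_div_mem_Icc_of_le_of_le_exp_mul (h₀.pos hw) (hle w) (hup w)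
  have hfE : ∀ w : E, w ≠ 0 → Real.log (N₁ w / N₀ w) ∈ Set.Icc 0 C := fun w hw =>
    hf w (by simpa using hw)
  obtain ⟨k, rfl⟩ : ∃ k, v = k + e := ⟨v - e, by have := E.finrank_le; omega⟩
  have hmono : ∀ x y : ℝ, 0 ≤ x → x ≤ y → |x| ^ p ≤ |y| ^ p := fun x y hx hxy =>
    Real.rpow_le_rpow (abs_nonneg x) (abs_le_abs_of_nonneg hx hxy) (by linarith)
  rw [natCast_mul_dp_rpow (by linarith), natCast_mul_dp_rpow (by linarith), Nat.cast_add,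
    add_sub_cancel_right]
  refine abs_sum_sub_sum_le_of_interlace (fun j _ => Real.rpow_nonneg (abs_nonneg _) p)
    (fun j hj => ?_) (fun j hj => ?_) (fun j hj => ?_) <;> rw [mem_Icc] at hj
  · have h := logSpec_mem_Icc hf hj.1 (by omega)
    exact Real.rpow_le_rpow (abs_nonneg _) ((abs_of_nonneg h.1).le.trans h.2) (by linarith)
  · exact hmono _ _ (logSpec_mem_Icc hfE hj.1 (by omega)).1
      (logSpec_restrict_le E hf hj.1 (by omega))
  · exact hmono _ _ (logSpec_mem_Icc hf (by omega) (by omega)).1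
      (logSpec_add_le_logSpec_restrict E hf hj.1 (by omega) (by omega))

/-- Comparison of `d_p`-distances on a vector space and on a subspace: if
`N₀ ≤ N₁ ≤ e^C N₀`, then `|v d_p(N₀,N₁)^p - e d_p(N₀|_E,N₁|_E)^p| ≤ (v-e) C^p`. -/
theorem dp_restrict_compare {V : Type*} [AddCommGroup V] [Module ℂ V]
    [FiniteDimensional ℂ V] (v e : ℕ) (hv : 1 ≤ v) (hdim : Module.finrank ℂ V = v)
    (E : Submodule ℂ V) (he : 1 ≤ e) (hdimE : Module.finrank ℂ ↥E = e)
    (N₀ N₁ : V → ℝ) (h₀ : IsCNorm N₀) (h₁ : IsCNorm N₁)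
    (C : ℝ) (hC : 0 ≤ C)
    (hle : ∀ w, N₀ w ≤ N₁ w) (hup : ∀ w, N₁ w ≤ Real.exp C * N₀ w)
    (p : ℝ) (hp : 1 ≤ p) :
    |(v : ℝ) * dp p v N₀ N₁ ^ p -
        (e : ℝ) * dp p e (fun w : ↥E => N₀ ↑w) (fun w : ↥E => N₁ ↑w) ^ p| ≤
      ((v : ℝ) - (e : ℝ)) * C ^ p :=
  dp_restrict_compare_general v e hdim E hdimE N₀ N₁ h₀ C hle hup p hp
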